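/- arXiv:2405.18453 — 2 statements merged into one kernel-verified Lean document; each statement's English description precedes it below -/
import Mathlib

section
/- A tournament T of order n ≥ 3 has exactly one directed cycle if and only if T is isomorphic to T^r_n for some r with 1 ≤ r ≤ n−2, where T^r_n has vertex set {1,...,n} and arc ij if and only if i < j and (i,j) ≠ (r, r+2), together with the arc from r+2 to r. -/
/-- `f` gives the partite set (as a `Bool`) of each vertex; `A` is the arc relation.
`IsBipTournament f A` says `A` is an orientation of the complete bipartite graph with
(nonempty) partite sets `f ⁻¹ true` and `f ⁻¹ false`. -/
def IsBipTournament {V : Type*} (f : V → Bool) (A : V → V → Prop) : Prop :=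
  (∃ v, f v = true) ∧ (∃ v, f v = false) ∧
  (∀ u v, f u = f v → ¬ A u v) ∧ (∀ u v, f u ≠ f v → (A u v ↔ ¬ A v u))

/-- `T` is a tournament (on the whole vertex type). -/
def IsTournament {V : Type*} (T : V → V → Prop) : Prop :=
  (∀ v, ¬ T v v) ∧ ∀ u v, u ≠ v → (T u v ↔ ¬ T v u)

/-- `T` is a tournament completion of the digraph with arc relation `A`. -/
def IsCompletion {V : Type*} (A T : V → V → Prop) : Prop :=
  IsTournament T ∧ ∀ u v, A u v → T u v
/-- Cyclic successor in `Fin k`. -/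
def cyc {k : ℕ} (i : Fin k) : Fin k :=
  ⟨(i.val + 1) % k, Nat.mod_lt _ (lt_of_le_of_lt (Nat.zero_le _) i.isLt)⟩

/-- `c` lists the vertices of a directed cycle of length `k` in the digraph `A`. -/
def IsDicycle {V : Type*} (A : V → V → Prop) (k : ℕ) (c : Fin k → V) : Prop :=
  2 ≤ k ∧ Function.Injective c ∧ ∀ i, A (c i) (c (cyc i))

/-- The digraph `A` has no directed cycle. -/
def Acyclic {V : Type*} (A : V → V → Prop) : Prop :=
  ¬ ∃ (k : ℕ) (c : Fin k → V), IsDicycle A k c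

/-- The set of arcs traversed by the cycle `c`. -/
def arcSet {V : Type*} {k : ℕ} (c : Fin k → V) : Set (V × V) :=
  {p | ∃ i, p = (c i, c (cyc i))}

/-- The arc relation of the tournament `T^r_n` on vertices `{1, …, n}` (modelled as
`Fin n` via `i ↦ i+1`): `i → j` iff `i < j` and `(i,j) ≠ (r, r+2)`, together with
the arc `r+2 → r`. -/
def TrnArc (n r : ℕ) (i j : Fin n) : Prop :=
  ((i : ℕ) < (j : ℕ) ∧ ¬ ((i : ℕ) + 1 = r ∧ (j : ℕ) + 1 = r + 2)) ∨
  ((i : ℕ) + 1 = r + 2 ∧ (j : ℕ) + 1 = r)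

/-! A tournament without directed triangles is transitive, hence acyclic, so a tournament with a
directed cycle has a directed triangle `a → b → d → a`. If every cycle has the arcs of this
triangle, reversing the arc `d → a` destroys every triangle, so it leaves a linear order, in
which `b` is the only vertex between `a` and `d`; listing the vertices in this order exhibits
`T` as `T^r_n`. Conversely, in `T^r_n` the arc leaving the largest vertex of a cycle must be the
backward arc `r + 2 → r`, and from `r` the cycle can only climb back to `r + 2` through `r + 1`. -/

section Cycles

variable {V W : Type*}

lemma cyc_eq_add_one {m : ℕ} (i : Fin (m + 1)) : cyc i = i + 1 := by
  ext
  simp [cyc, Fin.val_add]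

lemma arcSet_comp (g : V → W) {k : ℕ} (c : Fin k → V) :
    arcSet (g ∘ c) = Prod.map g g '' arcSet c := by
  ext p
  simp [arcSet, eq_comm]

lemma arcSet_rotate {m : ℕ} (c : Fin (m + 1) → V) (t : Fin (m + 1)) :
    arcSet (fun j => c (j + t)) = arcSet c := by
  ext p
  simp only [arcSet, Set.mem_ofPred_eq, cyc_eq_add_one]
  constructor
  · rintro ⟨i, rfl⟩
    exact ⟨i + t, by rw [add_right_comm]⟩
  · rintro ⟨i, rfl⟩
    exact ⟨i - t, by simp [add_right_comm]⟩

variable {A : V → V → Prop} {k : ℕ} {c : Fin k → V}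

lemma IsDicycle.map {B : W → W → Prop} (hc : IsDicycle A k c) {g : V → W}
    (hg : Function.Injective g) (hAB : ∀ u v, A u v → B (g u) (g v)) : IsDicycle B k (g ∘ c) :=
  ⟨hc.1, hg.comp hc.2.1, fun i => hAB _ _ (hc.2.2 i)⟩

lemma IsDicycle.rotate {m : ℕ} {c : Fin (m + 1) → V} (hc : IsDicycle A (m + 1) c)
    (t : Fin (m + 1)) : IsDicycle A (m + 1) (fun j => c (j + t)) := by
  refine ⟨hc.1, hc.2.1.comp (add_left_injective t), fun j => ?_⟩
  simpa only [cyc_eq_add_one, add_right_comm] using hc.2.2 (j + t)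

lemma IsDicycle.exists_transGen_self (hc : IsDicycle A k c) : ∃ v, Relation.TransGen A v v := by
  obtain ⟨m, rfl⟩ : ∃ m, k = m + 1 := ⟨k - 1, by have := hc.1; omega⟩
  have hreach : ∀ i, Relation.ReflTransGen A (c 0) (c i) := by
    refine Fin.induction .refl fun i hi => hi.tail ?_
    simpa only [cyc_eq_add_one, Fin.coeSucc_eq_succ] using hc.2.2 i.castSucc
  refine ⟨c 0, .tail' (hreach (Fin.last m)) ?_⟩
  simpa only [cyc_eq_add_one, Fin.last_add_one] using hc.2.2 (Fin.last m)

lemma not_isDicycle_of_isStrictOrder [IsStrictOrder V A] : ¬ IsDicycle A k c := fun hc => by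
  obtain ⟨v, hv⟩ := hc.exists_transGen_self
  exact irrefl v (Relation.transGen_eq_self (r := A) ▸ hv)

end Cycles

def reverseArc {V : Type*} (A : V → V → Prop) (x y : V) (u v : V) : Prop :=
  (A u v ∧ ¬ (u = x ∧ v = y)) ∨ (u = y ∧ v = x)

section Tournament

variable {V : Type*} {T : V → V → Prop} {x y z : V}

namespace IsTournament

lemma ne (hT : IsTournament T) (h : T x y) : x ≠ y := by
  rintro rfl
  exact hT.1 x h

lemma asymm (hT : IsTournament T) (h : T x y) : ¬ T y x :=
  (hT.2 x y (hT.ne h)).1 h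

lemma arc_or_arc (hT : IsTournament T) (h : x ≠ y) : T x y ∨ T y x :=
  or_iff_not_imp_right.2 (hT.2 x y h).2

lemma isStrictTotalOrder_of_forall_not_triangle (hT : IsTournament T)
    (h : ∀ x y z, T x y → T y z → ¬ T z x) : IsStrictTotalOrder V T where
  irrefl := hT.1
  trans x y z hxy hyz := by
    have hxz : x ≠ z := by
      rintro rfl
      exact hT.asymm hxy hyz
    exact (hT.arc_or_arc hxz).resolve_right (h x y z hxy hyz)
  trichotomous x y hxy hyx := by
    by_contra hne
    exact (hT.arc_or_arc hne).elim hxy hyx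

lemma exists_triangle {k : ℕ} {c : Fin k → V} (hT : IsTournament T) (hc : IsDicycle T k c) :
    ∃ x y z, T x y ∧ T y z ∧ T z x := by
  by_contra! h
  have := hT.isStrictTotalOrder_of_forall_not_triangle h
  exact not_isDicycle_of_isStrictOrder hc

lemma isDicycle_three (hT : IsTournament T) (hxy : T x y) (hyz : T y z) (hzx : T z x) :
    IsDicycle T 3 ![x, y, z] := by
  have := hT.ne hxy
  have := hT.ne hyz
  have := hT.ne hzx
  refine ⟨by norm_num, ?_, fun i => ?_⟩
  · intro i j hij
    fin_cases i <;> fin_cases j <;> simp_all [Ne.symm]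
  · fin_cases i <;> simpa [cyc]

lemma reverseArc (hT : IsTournament T) (h : T x y) : IsTournament (reverseArc T x y) := by
  have hne := hT.ne h
  refine ⟨fun v => ?_, fun u v huv => ?_⟩
  · rintro (⟨hv, -⟩ | ⟨rfl, rfl⟩)
    exacts [hT.1 v hv, hne rfl]
  · by_cases hxy : u = x ∧ v = y
    · obtain ⟨rfl, rfl⟩ := hxy
      simp [_root_.reverseArc, hne]
    by_cases hyx : u = y ∧ v = x
    · obtain ⟨rfl, rfl⟩ := hyx
      simp [_root_.reverseArc, hne]
    have hxy' : ¬ (v = y ∧ u = x) := fun h => hxy h.symm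
    have hyx' : ¬ (v = x ∧ u = y) := fun h => hyx h.symm
    simpa only [_root_.reverseArc, hxy, hyx, hxy', hyx', not_false_eq_true, and_true, or_false]
      using hT.2 u v huv

end IsTournament

lemma arcSet_three (x y z : V) : arcSet ![x, y, z] = {(x, y), (y, z), (z, x)} := by
  ext p
  simp [arcSet, Fin.exists_fin_succ, cyc]

lemma reverseArc_reverseArc (hT : IsTournament T) (h : T x y) :
    reverseArc (reverseArc T x y) y x = T := by
  have hne := hT.ne h
  have hyx := hT.asymm h
  ext u v
  unfold reverseArc
  constructor
  · rintro (⟨(⟨huv, -⟩ | ⟨rfl, rfl⟩), hn⟩ | ⟨rfl, rfl⟩)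
    exacts [huv, (hn ⟨rfl, rfl⟩).elim, h]
  · intro huv
    by_cases hxy : u = x ∧ v = y
    · exact .inr hxy
    · refine .inl ⟨.inl ⟨huv, hxy⟩, ?_⟩
      rintro ⟨rfl, rfl⟩
      exact hyx huv

lemma reverseArc_map {W : Type*} {B : W → W → Prop} {e : V → W} (he : Function.Injective e)
    (hTB : ∀ u v, T u v ↔ B (e u) (e v)) (u v : V) :
    reverseArc T x y u v ↔ reverseArc B (e x) (e y) (e u) (e v) := by
  simp only [reverseArc, hTB, he.eq_iff]

end Tournament

section LinearOrder

variable {V : Type*} [LinearOrder V] {x y z : V}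

lemma isTournament_lt : IsTournament (fun u v : V => u < v) :=
  ⟨lt_irrefl, fun _ _ huv => ⟨fun h => h.not_gt, fun h => huv.lt_of_le (not_lt.1 h)⟩⟩

lemma isDicycle_reverseArc_lt (hxy : x < y) (hyz : y < z) :
    IsDicycle (reverseArc (· < ·) x z) 3 ![x, y, z] :=
  (isTournament_lt.reverseArc (hxy.trans hyz)).isDicycle_three (.inl ⟨hxy, fun h => hyz.ne h.2⟩)
    (.inl ⟨hyz, fun h => hxy.ne' h.1⟩) (.inr ⟨rfl, rfl⟩)

lemma IsDicycle.exists_rotate_reverseArc_lt {m : ℕ} {c : Fin (m + 1) → V}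
    (hc : IsDicycle (reverseArc (· < ·) x z) (m + 1) c) :
    ∃ c' : Fin (m + 1) → V, IsDicycle (reverseArc (· < ·) x z) (m + 1) c' ∧
      arcSet c' = arcSet c ∧ c' 0 = x ∧ c' (Fin.last m) = z ∧ ∀ j, c' j ≤ z := by
  obtain ⟨i, hi⟩ := Finite.exists_max c
  have hback : c i = z ∧ c (i + 1) = x := by
    rcases hc.2.2 i with ⟨hlt, -⟩ | h
    · rw [cyc_eq_add_one] at hlt
      exact absurd (hi _) (not_le.2 hlt)
    · rwa [cyc_eq_add_one] at h
  refine ⟨fun j => c (j + (i + 1)), hc.rotate _, arcSet_rotate c _, ?_, ?_, fun j => hback.1 ▸ hi _⟩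
  · simp [hback.2]
  · simp only [add_left_comm, Fin.last_add_one, add_zero, hback.1]

lemma arcSet_eq_of_isDicycle_reverseArc_lt (hxy : x ⋖ y) (hyz : y ⋖ z) {k : ℕ} {c : Fin k → V}
    (hc : IsDicycle (reverseArc (· < ·) x z) k c) : arcSet c = arcSet ![x, y, z] := by
  obtain ⟨m, rfl⟩ : ∃ m, k = m + 1 := ⟨k - 1, by have := hc.1; omega⟩
  obtain ⟨d, hd, hdc, hd0, hdl, hle⟩ := hc.exists_rotate_reverseArc_lt
  rw [← hdc]
  have hstep : ∀ j, d j ≠ z → d j < d (j + 1) ∧ ¬ (d j = x ∧ d (j + 1) = z) := by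
    intro j hj
    rcases hd.2.2 j with h | ⟨h, -⟩
    · simpa only [cyc_eq_add_one] using h
    · exact absurd h hj
  have hd1 : d 1 = y := by
    obtain ⟨hlt, hne⟩ := hstep 0 (hd0 ▸ (hxy.lt.trans hyz.lt).ne)
    rw [hd0, zero_add] at hlt hne
    exact le_antisymm (hyz.le_of_lt ((hle 1).lt_of_ne (hne ⟨rfl, ·⟩))) (hxy.ge_of_gt hlt)
  have hd2 : d (1 + 1) = z :=
    le_antisymm (hle _) (hyz.ge_of_gt (hd1 ▸ (hstep 1 (hd1 ▸ hyz.lt.ne)).1))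
  obtain rfl : m = 2 := by
    have h1 : (1 : Fin (m + 1)) ≠ Fin.last m := fun h => hyz.lt.ne (by rw [← hd1, h, hdl])
    have h2 := congrArg Fin.val (hd.2.1 (hd2.trans hdl.symm))
    rcases m with _ | _ | m
    · exact absurd rfl h1
    · exact absurd rfl h1
    · rw [Fin.val_add_one_of_lt (Fin.lt_last_iff_ne_last.2 h1), Fin.val_one, Fin.val_last] at h2
      omega
  congr 1
  funext j
  fin_cases j
  exacts [hd0, hd1, hd2]

end LinearOrder

lemma exists_equiv_fin_of_isStrictTotalOrder {V : Type*} [Fintype V] {n : ℕ} (L : V → V → Prop)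
    [IsStrictTotalOrder V L] (hcard : Fintype.card V = n) :
    ∃ e : V ≃ Fin n, ∀ u v, L u v ↔ e u < e v := by
  classical
  let := linearOrderOfSTO L
  exact ⟨(Fintype.orderIsoFinOfCardEq V hcard).symm.toEquiv,
    fun u v => (Fintype.orderIsoFinOfCardEq V hcard).symm.lt_iff_lt.symm⟩

lemma trnArc_eq {n : ℕ} (x z : Fin n) (hz : (z : ℕ) = x + 2) :
    TrnArc n (x + 1) = reverseArc (· < ·) x z := by
  ext i j
  simp only [TrnArc, reverseArc, Fin.lt_def, Fin.ext_iff]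
  omega

section UniqueTriangle

variable {V : Type*} {T : V → V → Prop} {a b d : V}

lemma forall_not_triangle_reverseArc (hT : IsTournament T) (hab : T a b) (hbd : T b d)
    (hda : T d a)
    (htri : ∀ x y z, T x y → T y z → T z x → (x, y) ∈ ({(a, b), (b, d), (d, a)} : Set (V × V))) :
    ∀ x y z, reverseArc T d a x y → reverseArc T d a y z → ¬ reverseArc T d a z x := by
  simp only [Set.mem_insert_iff, Set.mem_singleton_iff, Prod.mk.injEq] at htri
  have := hT.ne hab
  have := hT.ne hbd
  have := hT.ne hda
  -- otherwise `w`, `b` and one of `a`, `d` form a triangle with an arc outside `a → b → d → a`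
  have hout : ∀ w, T d w → ¬ T w a := by
    intro w hdw hwa
    have hwb : w ≠ b := by
      rintro rfl
      exact hT.asymm hbd hdw
    rcases hT.arc_or_arc hwb with hwb | hbw
    · grind [hT.1, htri w b d hwb hbd hdw]
    · grind [hT.1, htri b w a hbw hwa hab]
  rintro x y z (⟨hxy, nxy⟩ | ⟨rfl, rfl⟩) (⟨hyz, nyz⟩ | ⟨hy, hz⟩) (⟨hzx, nzx⟩ | ⟨hz', hx'⟩)
  · grind [htri x y z hxy hyz hzx, htri y z x hyz hzx hxy, htri z x y hzx hxy hyz]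
  all_goals grind

lemma eq_of_reverseArc_of_reverseArc (hT : IsTournament T) (hab : T a b) (hda : T d a)
    (htri : ∀ x y z, T x y → T y z → T z x → (x, y) ∈ ({(a, b), (b, d), (d, a)} : Set (V × V)))
    {v : V} (hav : reverseArc T d a a v) (hvd : reverseArc T d a v d) : v = b := by
  have hL := hT.reverseArc hda
  have hva : v ≠ a := by
    rintro rfl
    exact hL.1 v hav
  have hvd' : v ≠ d := by
    rintro rfl
    exact hL.1 v hvd
  have hav : T a v := (hav.resolve_right fun h => hvd' h.2).1
  have hvd : T v d := (hvd.resolve_right fun h => hva h.1).1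
  have := htri a v d hav hvd hda
  have := hT.ne hab
  have := hT.ne hda
  simp_all

end UniqueTriangle

lemma exists_equiv_trnArc_of_unique_triangle {V : Type*} [Fintype V] {n : ℕ} {T : V → V → Prop}
    {a b d : V} (hT : IsTournament T) (hcard : Fintype.card V = n) (hab : T a b) (hbd : T b d)
    (hda : T d a)
    (htri : ∀ x y z, T x y → T y z → T z x → (x, y) ∈ ({(a, b), (b, d), (d, a)} : Set (V × V))) :
    ∃ r : ℕ, 1 ≤ r ∧ r ≤ n - 2 ∧ ∃ e : V ≃ Fin n, ∀ u v, T u v ↔ TrnArc n r (e u) (e v) := by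
  set L := reverseArc T d a
  have hL : IsTournament L := hT.reverseArc hda
  have := hL.isStrictTotalOrder_of_forall_not_triangle
    (forall_not_triangle_reverseArc hT hab hbd hda htri)
  obtain ⟨e, he⟩ := exists_equiv_fin_of_isStrictTotalOrder L hcard
  have hab' : e a < e b := (he a b).1 (.inl ⟨hab, fun h => hT.ne hda h.1.symm⟩)
  have hbd' : e b < e d := (he b d).1 (.inl ⟨hbd, fun h => hT.ne hbd h.1⟩)
  have hbetween : ∀ j, e a < j → j < e d → j = e b := fun j haj hjd => by
    rw [← e.apply_symm_apply j] at haj hjd ⊢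
    exact congrArg e (eq_of_reverseArc_of_reverseArc hT hab hda htri ((he _ _).2 haj)
      ((he _ _).2 hjd))
  replace hab' : e a ⋖ e b := ⟨hab', fun j haj hjb => hjb.ne (hbetween j haj (hjb.trans hbd'))⟩
  replace hbd' : e b ⋖ e d := ⟨hbd', fun j hbj hjd => hbj.ne' (hbetween j (hab'.lt.trans hbj) hjd)⟩
  simp only [Fin.covBy_iff, Nat.covBy_iff_add_one_eq] at hab' hbd'
  refine ⟨e a + 1, by omega, by omega, e, fun u v => ?_⟩
  rw [trnArc_eq (e a) (e d) (by omega), ← reverseArc_map e.injective he,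
    reverseArc_reverseArc hT hda]

theorem stmt_7_general {V : Type*} [Fintype V] (n : ℕ)
    (hcard : Fintype.card V = n) (T : V → V → Prop) (hT : IsTournament T) :
    (∃ (k : ℕ) (c : Fin k → V), IsDicycle T k c ∧
        ∀ (k' : ℕ) (c' : Fin k' → V), IsDicycle T k' c' → arcSet c' = arcSet c) ↔
      ∃ r : ℕ, 1 ≤ r ∧ r ≤ n - 2 ∧
        ∃ e : V ≃ Fin n, ∀ u v, T u v ↔ TrnArc n r (e u) (e v) := by
  constructor
  · rintro ⟨k, c, hc, huniq⟩
    obtain ⟨a, b, d, hab, hbd, hda⟩ := hT.exists_triangle hc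
    refine exists_equiv_trnArc_of_unique_triangle hT hcard hab hbd hda fun x y z hxy hyz hzx => ?_
    rw [← arcSet_three, huniq _ _ (hT.isDicycle_three hab hbd hda),
      ← huniq _ _ (hT.isDicycle_three hxy hyz hzx), arcSet_three]
    exact .inl rfl
  · rintro ⟨_ | s, hr, hs, e, he⟩
    · omega
    set x : Fin n := ⟨s, by omega⟩
    set z : Fin n := ⟨s + 2, by omega⟩
    have he' : ∀ u v, T u v ↔ reverseArc (· < ·) x z (e u) (e v) := by
      simpa only [← trnArc_eq x z rfl] using he
    have hxy : x ⋖ ⟨s + 1, by omega⟩ := by simp [Fin.covBy_iff, x]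
    have hyz : (⟨s + 1, by omega⟩ : Fin n) ⋖ z := by simp [Fin.covBy_iff, z]
    refine ⟨3, e.symm ∘ ![x, _, z], (isDicycle_reverseArc_lt hxy.lt hyz.lt).map e.symm.injective
      fun u v h => by simpa [he'] using h, fun k c hc => ?_⟩
    have := arcSet_eq_of_isDicycle_reverseArc_lt hxy hyz
      (hc.map e.injective fun u v h => (he' u v).1 h)
    rw [arcSet_comp, ← this, ← arcSet_comp, ← Function.comp_assoc, e.symm_comp_self,
      Function.id_comp]

/-- A tournament of order `n ≥ 3` has exactly one directed cycle iff it is isomorphic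
to `T^r_n` for some `1 ≤ r ≤ n - 2`. -/
theorem stmt_7 {V : Type*} [Fintype V] (n : ℕ) (hn : 3 ≤ n)
    (hcard : Fintype.card V = n) (T : V → V → Prop) (hT : IsTournament T) :
    (∃ (k : ℕ) (c : Fin k → V), IsDicycle T k c ∧
        ∀ (k' : ℕ) (c' : Fin k' → V), IsDicycle T k' c' → arcSet c' = arcSet c) ↔
      ∃ r : ℕ, 1 ≤ r ∧ r ≤ n - 2 ∧
        ∃ e : V ≃ Fin n, ∀ u v, T u v ↔ TrnArc n r (e u) (e v) :=
  stmt_7_general n hcard T hT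
end

section
/- Let D be an acyclic bipartite tournament of order n. The following are equivalent: (1) some tournament completion of D has exactly one augmented (2,1)-dicycle; (2) there exist two vertices u1, u2 in a common partite set of D with outdegree(u1) = outdegree(u2) + 1; (3) D ≅ D_X for some X = {x1 < ... < xn} ⊂ ℤ⁺ with x_l ≡ x_{l+2} ≢ x_{l+1} (mod 2) for some l ∈ [n−2]. -/
/-- `c` is an augmented `(2,1)`-dicycle of the completion `T` of the bipartite
tournament `(f, A)`: a directed 3-cycle of `T` using at least one arc not in `A`,
whose three vertices do not all lie in one partite set (hence exactly two in one
partite set and one in the other). -/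
def Aug21 {V : Type*} (f : V → Bool) (A T : V → V → Prop) (c : Fin 3 → V) : Prop :=
  Function.Injective c ∧ (∀ i, T (c i) (c (i + 1))) ∧
  (∃ i, ¬ A (c i) (c (i + 1))) ∧ ¬ (f (c 0) = f (c 1) ∧ f (c 1) = f (c 2))



/-!
An acyclic bipartite tournament admits a vertex ordering in which `u → v` exactly when `u`
precedes `v` and the two lie in different parts; this is `D ≅ D_X`, with the part of a vertex
read off as the parity of its label. In particular out-neighbourhoods within a part are nested.

If `p → q → r → p` is an augmented `(2,1)`-dicycle of a completion with `p, q` in one part, then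
`r ∈ N⁺(q) \ N⁺(p)`, so `deg⁺ p < deg⁺ q`; conversely, once `p → q`, every such `r` closes an
augmented `(2,1)`-dicycle. So a unique one forces `|N⁺(q) \ N⁺(p)| = 1`, and if
`deg⁺ u₁ = deg⁺ u₂ + 1` the completion orienting each part from larger to smaller out-degree,
except for `u₂ → u₁`, has exactly one.

In the ordering, `N⁺(i) \ N⁺(j)` for `i < j` in one part consists of the positions strictly
between them in the other part. When it is a single position `k`, its neighbours `k - 1` and
`k + 1` lie in the part of `i`, which is condition (3) with `l = k - 1`.
-/

open Finset Relation

section BipartiteTournament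

variable {V : Type*} {f : V → Bool} {A : V → V → Prop}

namespace IsBipTournament

theorem not_arc (h : IsBipTournament f A) {u v : V} (hf : f u = f v) : ¬ A u v :=
  h.2.2.1 u v hf

theorem arc_iff_not_arc (h : IsBipTournament f A) {u v : V} (hf : f u ≠ f v) : A u v ↔ ¬ A v u :=
  h.2.2.2 u v hf

theorem irrefl (h : IsBipTournament f A) (v : V) : ¬ A v v :=
  h.not_arc rfl

theorem ne_of_arc (h : IsBipTournament f A) {u v : V} (huv : A u v) : f u ≠ f v :=
  fun hf => h.not_arc hf huv

theorem arc_of_not_arc (h : IsBipTournament f A) {u v : V} (hf : f u ≠ f v) (huv : ¬ A u v) :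
    A v u :=
  (h.arc_iff_not_arc hf.symm).mpr huv

end IsBipTournament

theorem Relation.TransGen.exists_walk {a b : V} (hab : TransGen A a b) :
    ∃ k, 0 < k ∧ ∃ c : ℕ → V, c 0 = a ∧ c k = b ∧ ∀ i < k, A (c i) (c (i + 1)) := by
  induction hab with
  | @single b hab =>
    refine ⟨1, one_pos, fun i => if i = 0 then a else b, by simp, by simp, fun i hi => ?_⟩
    obtain rfl : i = 0 := by omega
    simpa using hab
  | @tail b d _ hbd ih =>
    obtain ⟨k, hk, c, hc0, hck, hc⟩ := ih
    refine ⟨k + 1, k.succ_pos, fun i => if i ≤ k then c i else d, by simp [hc0], by simp,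
      fun i hi => ?_⟩
    rcases (Nat.lt_succ_iff.mp hi).lt_or_eq with hi | rfl
    · simpa [hi.le, Nat.succ_le_of_lt hi] using hc i hi
    · simpa [hck] using hbd

namespace Acyclic

theorem not_closed_walk (hirr : ∀ v, ¬ A v v) (hacyc : Acyclic A) (k : ℕ) (hk : 0 < k)
    (c : ℕ → V) (hck : c k = c 0) (hc : ∀ i < k, A (c i) (c (i + 1))) : False := by
  induction k using Nat.strong_induction_on generalizing c with
  | _ k ih =>
    by_cases hinj : ∀ a b, a < b → b < k → c a ≠ c b
    · have hk2 : 2 ≤ k := by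
        by_contra hk2
        obtain rfl : k = 1 := by omega
        exact hirr (c 0) (hck ▸ hc 0 one_pos)
      refine hacyc ⟨k, fun i => c i, hk2, fun i j hij => ?_, fun i => ?_⟩
      · by_contra hne
        rcases lt_or_gt_of_ne (Fin.val_ne_of_ne hne) with hlt | hlt
        · exact hinj _ _ hlt j.isLt hij
        · exact hinj _ _ hlt i.isLt hij.symm
      · rcases (show (i : ℕ) + 1 ≤ k from i.isLt).lt_or_eq with hi | hi
        · simpa [cyc, Nat.mod_eq_of_lt hi] using hc i i.isLt
        · simpa [cyc, hi, ← hck] using hc i i.isLt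
    · -- a repeated vertex cuts out a shorter closed walk
      push Not at hinj
      obtain ⟨a, b, hab, hbk, hcab⟩ := hinj
      refine ih (b - a) (by omega) (by omega) (fun i => c (a + i)) ?_ fun i hi => ?_
      · simpa [Nat.add_sub_cancel' hab.le] using hcab.symm
      · simpa [add_assoc] using hc (a + i) (by omega)

theorem not_transGen_self (hirr : ∀ v, ¬ A v v) (hacyc : Acyclic A) (v : V) :
    ¬ TransGen A v v := fun hv =>
  let ⟨k, hk, c, hc0, hck, hc⟩ := hv.exists_walk
  hacyc.not_closed_walk hirr k hk c (hck.trans hc0.symm) hc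

end Acyclic

theorem exists_equiv_fin_lt_of_lt [Fintype V] {n : ℕ} (hcard : Fintype.card V = n)
    (g : V → ℕ) : ∃ e : V ≃ Fin n, ∀ u v, g u < g v → e u < e v := by
  let key : V → ℕ ×ₗ Fin (Fintype.card V) := fun u => toLex (g u, Fintype.equivFin V u)
  have hkey : Function.Injective key := fun u v huv =>
    (Fintype.equivFin V).injective (congrArg Prod.snd (toLex.injective huv))
  let := LinearOrder.lift' key hkey
  exact ⟨(Fintype.orderIsoFinOfCardEq V hcard).symm.toEquiv, fun u v huv =>
    (Fintype.orderIsoFinOfCardEq V hcard).symm.strictMono (Prod.Lex.lt_iff.mpr (Or.inl huv))⟩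

theorem Acyclic.exists_equiv_fin [Fintype V] {n : ℕ} (hcard : Fintype.card V = n)
    (hirr : ∀ v, ¬ A v v) (hacyc : Acyclic A) :
    ∃ e : V ≃ Fin n, ∀ u v, A u v → e u < e v := by
  obtain ⟨e, he⟩ := exists_equiv_fin_lt_of_lt hcard fun u => {w | TransGen A w u}.ncard
  refine ⟨e, fun u v huv => he u v (Set.ncard_lt_ncard ?_)⟩
  exact (Set.ssubset_iff_of_subset fun w hw => TransGen.tail hw huv).mpr
    ⟨u, TransGen.single huv, hacyc.not_transGen_self hirr u⟩

theorem IsBipTournament.exists_equiv_fin [Fintype V] {n : ℕ} (hcard : Fintype.card V = n)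
    (h : IsBipTournament f A) (hacyc : Acyclic A) :
    ∃ e : V ≃ Fin n, ∀ u v, A u v ↔ e u < e v ∧ f u ≠ f v := by
  obtain ⟨e, he⟩ := hacyc.exists_equiv_fin hcard h.irrefl
  refine ⟨e, fun u v => ⟨fun huv => ⟨he u v huv, h.ne_of_arc huv⟩, fun ⟨hlt, hf⟩ => ?_⟩⟩
  by_contra huv
  exact (he v u (h.arc_of_not_arc hf huv)).not_gt hlt

section OutNeighbourhood

variable [Fintype V] [DecidableRel A]

def outNbhd (A : V → V → Prop) [DecidableRel A] (u : V) : Finset V :=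
  univ.filter fun w => A u w

@[simp]
theorem mem_outNbhd {u w : V} : w ∈ outNbhd A u ↔ A u w := by
  simp [outNbhd]

theorem outNbhd_subset_of_le {α : Type*} [Preorder α] {e : V → α}
    (he : ∀ u v, A u v ↔ e u < e v ∧ f u ≠ f v) {u v : V} (hf : f u = f v) (hle : e u ≤ e v) :
    outNbhd A v ⊆ outNbhd A u := fun w hw => by
  simp only [mem_outNbhd, he] at hw ⊢
  exact ⟨hle.trans_lt hw.1, hf ▸ hw.2⟩

theorem IsBipTournament.outNbhd_total (h : IsBipTournament f A) (hacyc : Acyclic A) {u v : V}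
    (hf : f u = f v) : outNbhd A u ⊆ outNbhd A v ∨ outNbhd A v ⊆ outNbhd A u := by
  obtain ⟨e, he⟩ := h.exists_equiv_fin rfl hacyc
  rcases le_total (e u) (e v) with hle | hle
  · exact Or.inr (outNbhd_subset_of_le he hf hle)
  · exact Or.inl (outNbhd_subset_of_le he hf.symm hle)

theorem IsBipTournament.outNbhd_subset_of_mem_sdiff [DecidableEq V] (h : IsBipTournament f A)
    (hacyc : Acyclic A) {p q r : V} (hf : f p = f q) (hr : r ∈ outNbhd A q \ outNbhd A p) :
    outNbhd A p ⊆ outNbhd A q :=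
  (h.outNbhd_total hacyc hf).resolve_right fun hqp =>
    (mem_sdiff.mp hr).2 (hqp (mem_sdiff.mp hr).1)

end OutNeighbourhood

theorem IsCompletion.arc_iff (h : IsBipTournament f A) {T : V → V → Prop}
    (hT : IsCompletion A T) {u v : V} (hf : f u ≠ f v) : T u v ↔ A u v := by
  refine ⟨fun huv => ?_, hT.2 u v⟩
  by_contra hA
  exact (hT.1.2 u v (ne_of_apply_ne f hf)).mp huv (hT.2 v u (h.arc_of_not_arc hf hA))

theorem range_fin_three {α : Type*} (c : Fin 3 → α) : Set.range c = {c 0, c 1, c 2} := by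
  ext; simp [Fin.exists_fin_succ, eq_comm]

theorem Aug21.exists_rotation {T : V → V → Prop} {c : Fin 3 → V} (hc : Aug21 f A T c) :
    ∃ p q r, f p = f q ∧ f p ≠ f r ∧ T p q ∧ T q r ∧ T r p ∧ Set.range c = {p, q, r} := by
  obtain ⟨-, hT, -, hf⟩ := hc
  have h01 : T (c 0) (c 1) := hT 0
  have h12 : T (c 1) (c 2) := hT 1
  have h20 : T (c 2) (c 0) := hT 2
  have hrange := range_fin_three c
  by_cases hf01 : f (c 0) = f (c 1)
  · exact ⟨c 0, c 1, c 2, hf01, hf01 ▸ fun hf12 => hf ⟨hf01, hf12⟩, h01, h12, h20, hrange⟩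
  by_cases hf12 : f (c 1) = f (c 2)
  · exact ⟨c 1, c 2, c 0, hf12, fun h10 => hf01 h10.symm, h12, h20, h01,
      hrange.trans (by ext; simp only [Set.mem_insert_iff, Set.mem_singleton_iff]; tauto)⟩
  · have hf20 : f (c 2) = f (c 0) := by
      revert hf01 hf12; cases f (c 0) <;> cases f (c 1) <;> cases f (c 2) <;> simp
    exact ⟨c 2, c 0, c 1, hf20, hf20 ▸ fun h01 => hf01 h01, h20, h01, h12,
      hrange.trans (by ext; simp only [Set.mem_insert_iff, Set.mem_singleton_iff]; tauto)⟩

section Triangle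

variable [Fintype V] [DecidableEq V] [DecidableRel A] {T : V → V → Prop}

theorem IsCompletion.mem_outNbhd_sdiff (h : IsBipTournament f A) (hT : IsCompletion A T)
    {p q r : V} (hpq : f p = f q) (hpr : f p ≠ f r) (hqr : T q r) (hrp : T r p) :
    r ∈ outNbhd A q \ outNbhd A p := by
  have hArp : A r p := (hT.arc_iff h hpr.symm).mp hrp
  simpa [(hT.arc_iff h (hpq ▸ hpr)).mp hqr] using (h.arc_iff_not_arc hpr.symm).mp hArp

theorem IsCompletion.aug21_of_mem_sdiff (h : IsBipTournament f A) (hT : IsCompletion A T)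
    {p q r : V} (hpq : f p = f q) (hTpq : T p q) (hr : r ∈ outNbhd A q \ outNbhd A p) :
    Aug21 f A T ![p, q, r] := by
  simp only [mem_sdiff, mem_outNbhd] at hr
  have hqr : f q ≠ f r := h.ne_of_arc hr.1
  have hpr : f p ≠ f r := hpq ▸ hqr
  have hArp : A r p := h.arc_of_not_arc hpr hr.2
  have hne : p ≠ q := fun e => hT.1.1 p (e ▸ hTpq)
  refine ⟨?_, fun i => ?_, ⟨0, by simpa using h.not_arc hpq⟩, by simp [hqr]⟩
  · intro i j hij
    fin_cases i <;> fin_cases j <;>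
      simp_all [ne_of_apply_ne f hpr, ne_of_apply_ne f hqr, eq_comm]
  · fin_cases i
    · exact hTpq
    · exact hT.2 q r hr.1
    · exact hT.2 r p hArp

end Triangle

section FlipCompletion

variable [DecidableEq V] {α : Type*} [LinearOrder α]

def flipCompletion (f : V → Bool) (A : V → V → Prop) (key : V → α) (a b : V) :
    V → V → Prop :=
  fun u v => if f u = f v then (if s(u, v) = s(a, b) then u = a else key v < key u) else A u v

theorem flipCompletion_isCompletion (h : IsBipTournament f A) {key : V → α}
    (hkey : Function.Injective key) {a b : V} (hab : a ≠ b) :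
    IsCompletion A (flipCompletion f A key a b) := by
  refine ⟨⟨fun v => ?_, fun u v huv => ?_⟩, fun u v huv => ?_⟩
  · simp only [flipCompletion, if_true, Sym2.eq_iff, lt_irrefl, ite_prop_iff_or]
    rintro (⟨⟨rfl, rfl⟩ | ⟨rfl, rfl⟩, -⟩ | ⟨-, h⟩) <;> trivial
  · by_cases hf : f u = f v
    · by_cases hs : s(u, v) = s(a, b)
      · simp only [flipCompletion, hf, hs, Sym2.eq_swap.trans hs, if_true]
        rcases Sym2.eq_iff.mp hs with ⟨rfl, rfl⟩ | ⟨rfl, rfl⟩ <;> simp [hab.symm]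
      · simp only [flipCompletion, hf, hs, Sym2.eq_swap.symm.trans_ne hs, if_true, if_false]
        exact ⟨lt_asymm, fun hvu => (not_lt.mp hvu).lt_of_ne (hkey.ne huv.symm)⟩
    · simpa [flipCompletion, hf, Ne.symm hf] using h.arc_iff_not_arc hf
  · simp [flipCompletion, h.ne_of_arc huv, huv]

theorem flipCompletion_apply_same_part {key : V → α} {a b : V} (hab : a ≠ b) {u v : V}
    (hf : f u = f v) (huv : flipCompletion f A key a b u v) :
    u = a ∧ v = b ∨ key v < key u := by
  simp only [flipCompletion, hf, if_true] at huv
  split_ifs at huv with hs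
  · rcases Sym2.eq_iff.mp hs with hs | hs
    exacts [Or.inl hs, absurd (hs.1.symm.trans huv) hab.symm]
  · exact Or.inr huv

theorem flipCompletion_flip {key : V → α} {a b : V} (hf : f a = f b) :
    flipCompletion f A key a b a b := by
  simp [flipCompletion, hf]

end FlipCompletion

section UniqueAug21

variable [Fintype V] [DecidableEq V] [DecidableRel A]

theorem IsBipTournament.exists_card_outNbhd_eq_succ (h : IsBipTournament f A)
    (hacyc : Acyclic A) {T : V → V → Prop} (hT : IsCompletion A T) {c : Fin 3 → V}
    (hc : Aug21 f A T c)
    (huniq : ∀ c' : Fin 3 → V, Aug21 f A T c' → Set.range c' = Set.range c) :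
    ∃ u1 u2 : V, f u1 = f u2 ∧ #(outNbhd A u1) = #(outNbhd A u2) + 1 := by
  obtain ⟨p, q, r, hpq, hpr, hTpq, hqr, hrp, hrange⟩ := hc.exists_rotation
  have hr := hT.mem_outNbhd_sdiff h hpq hpr hqr hrp
  have hsub := h.outNbhd_subset_of_mem_sdiff hacyc hpq hr
  have hsingle : outNbhd A q \ outNbhd A p = {r} := by
    refine eq_singleton_iff_unique_mem.mpr ⟨hr, fun r' hr' => ?_⟩
    have hpr' : f p ≠ f r' := hpq ▸ h.ne_of_arc (mem_outNbhd.mp (mem_sdiff.mp hr').1)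
    have hmem : r' ∈ ({p, q, r} : Set V) := by
      rw [← hrange, ← huniq _ (hT.aug21_of_mem_sdiff h hpq hTpq hr')]
      exact ⟨2, rfl⟩
    simp only [Set.mem_insert_iff, Set.mem_singleton_iff] at hmem
    rcases hmem with rfl | rfl | rfl
    exacts [absurd rfl hpr', absurd hpq hpr', rfl]
  refine ⟨q, p, hpq.symm, ?_⟩
  rw [← card_sdiff_add_card_eq_card hsub, hsingle, card_singleton, add_comm]

theorem IsBipTournament.exists_unique_aug21 (h : IsBipTournament f A) (hacyc : Acyclic A)
    {u1 u2 : V} (hf : f u1 = f u2) (hd : #(outNbhd A u1) = #(outNbhd A u2) + 1) :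
    ∃ T : V → V → Prop, IsCompletion A T ∧ ∃ c : Fin 3 → V, Aug21 f A T c ∧
      ∀ c' : Fin 3 → V, Aug21 f A T c' → Set.range c' = Set.range c := by
  obtain ⟨e, he⟩ := exists_equiv_fin_lt_of_lt rfl fun u => #(outNbhd A u)
  have hne : u2 ≠ u1 := by rintro rfl; omega
  have hsub : outNbhd A u2 ⊆ outNbhd A u1 := (h.outNbhd_total hacyc hf).resolve_left
    fun hsub => by have := card_le_card hsub; omega
  obtain ⟨w, hw⟩ : ∃ w, outNbhd A u1 \ outNbhd A u2 = {w} :=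
    card_eq_one.mp (by rw [card_sdiff_of_subset hsub]; omega)
  have hT := flipCompletion_isCompletion h e.injective hne
  refine ⟨_, hT, ![u2, u1, w], hT.aug21_of_mem_sdiff h hf.symm (flipCompletion_flip hf.symm)
    (hw ▸ mem_singleton_self w), fun c' hc' => ?_⟩
  obtain ⟨p, q, r, hpq, hpr, hTpq, hqr, hrp, hrange⟩ := hc'.exists_rotation
  have hr := hT.mem_outNbhd_sdiff h hpq hpr hqr hrp
  have hlt : #(outNbhd A p) < #(outNbhd A q) := card_lt_card <|
    (ssubset_iff_of_subset (h.outNbhd_subset_of_mem_sdiff hacyc hpq hr)).mpr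
      ⟨r, (mem_sdiff.mp hr).1, (mem_sdiff.mp hr).2⟩
  rcases flipCompletion_apply_same_part hne hpq hTpq with ⟨rfl, rfl⟩ | hqp
  · rw [hw, mem_singleton] at hr
    rw [hrange, hr, range_fin_three]
    rfl
  · exact absurd (he p q hlt) hqp.not_gt

end UniqueAug21

end BipartiteTournament

section LaterOpposite

variable {β : Type*} [DecidableEq β] {n : ℕ} (b : Fin n → β)

/-- For `X = {x₀ < ⋯ < x_{n-1}}` with `b i` the parity of `xᵢ`, this is the out-neighbourhood of
`xᵢ` in `D_X`. -/
def laterOpposite (i : Fin n) : Finset (Fin n) :=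
  univ.filter fun k => i < k ∧ b i ≠ b k

variable {b}

theorem laterOpposite_subset {i j : Fin n} (hij : i ≤ j) (hb : b i = b j) :
    laterOpposite b j ⊆ laterOpposite b i := fun k hk => by
  simp only [laterOpposite, mem_filter, mem_univ, true_and] at hk ⊢
  exact ⟨hij.trans_lt hk.1, hb ▸ hk.2⟩

theorem laterOpposite_sdiff {i j : Fin n} (hij : i ≤ j) (hb : b i = b j) :
    laterOpposite b i \ laterOpposite b j = univ.filter fun k => i < k ∧ k < j ∧ b i ≠ b k := by
  ext k
  simp only [laterOpposite, mem_sdiff, mem_filter, mem_univ, true_and, ← hb, not_and, not_not]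
  constructor
  · rintro ⟨⟨hik, hbk⟩, hjk⟩
    refine ⟨hik, lt_of_le_of_ne (not_lt.mp fun h => hbk (hjk h)) ?_, hbk⟩
    rintro rfl
    exact hbk hb
  · rintro ⟨hik, hkj, hbk⟩
    exact ⟨⟨hik, hbk⟩, fun hjk => absurd (hkj.trans hjk) (lt_irrefl _)⟩

theorem card_laterOpposite_of_isolated (l : ℕ) (hl : l + 2 < n)
    (h02 : b ⟨l, by omega⟩ = b ⟨l + 2, hl⟩) (h01 : b ⟨l, by omega⟩ ≠ b ⟨l + 1, by omega⟩) :
    #(laterOpposite b ⟨l, by omega⟩) = #(laterOpposite b ⟨l + 2, hl⟩) + 1 := by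
  have hle : (⟨l, by omega⟩ : Fin n) ≤ ⟨l + 2, hl⟩ := Fin.mk_le_mk.mpr (by omega)
  have hsingle :
      laterOpposite b ⟨l, by omega⟩ \ laterOpposite b ⟨l + 2, hl⟩ = {⟨l + 1, by omega⟩} := by
    rw [laterOpposite_sdiff hle h02]
    ext ⟨k, hk⟩
    simp only [mem_filter, mem_univ, true_and, mem_singleton, Fin.mk_lt_mk, Fin.mk.injEq]
    constructor
    · rintro ⟨h1, h2, -⟩
      omega
    · rintro rfl
      exact ⟨by omega, by omega, h01⟩
  rw [← card_sdiff_add_card_eq_card (laterOpposite_subset hle h02), hsingle, card_singleton,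
    add_comm]

theorem exists_isolated_of_card_laterOpposite {i j : Fin n} (hb : b i = b j)
    (hd : #(laterOpposite b i) = #(laterOpposite b j) + 1) :
    ∃ l : ℕ, ∃ hl : l + 2 < n,
      b ⟨l, by omega⟩ = b ⟨l + 2, hl⟩ ∧ b ⟨l, by omega⟩ ≠ b ⟨l + 1, by omega⟩ := by
  have hij : i < j := lt_of_not_ge fun hji => by
    have := card_le_card (laterOpposite_subset hji hb.symm)
    omega
  obtain ⟨k, hk⟩ : ∃ k, (univ.filter fun k => i < k ∧ k < j ∧ b i ≠ b k) = {k} := by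
    rw [← card_eq_one, ← laterOpposite_sdiff hij.le hb,
      card_sdiff_of_subset (laterOpposite_subset hij.le hb)]
    omega
  have hkmem : i < k ∧ k < j ∧ b i ≠ b k := by
    simpa [← hk] using mem_singleton_self k
  have hcol : ∀ m (hm : m < n), i.val ≤ m → m ≤ j.val → m ≠ k.val → b ⟨m, hm⟩ = b i := by
    intro m hm him hmj hmk
    rcases him.lt_or_eq with him | rfl
    · rcases hmj.lt_or_eq with hmj | rfl
      · by_contra hbm
        have hmem : (⟨m, hm⟩ : Fin n) ∈ ({k} : Finset (Fin n)) := by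
          rw [← hk]
          exact mem_filter.mpr ⟨mem_univ _, him, hmj, Ne.symm hbm⟩
        exact hmk (congrArg Fin.val (mem_singleton.mp hmem))
      · exact hb.symm
    · rfl
  have hik : i.val < k.val := hkmem.1
  have hkj : k.val < j.val := hkmem.2.1
  refine ⟨k - 1, by omega, ?_, ?_⟩
  · rw [hcol (k - 1) _ (by omega) (by omega) (by omega),
      hcol (k - 1 + 2) _ (by omega) (by omega) (by omega)]
  · rw [hcol (k - 1) _ (by omega) (by omega) (by omega), show (⟨k - 1 + 1, _⟩ : Fin n) = k by
      ext; simp only; omega]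
    exact hkmem.2.2

theorem exists_card_laterOpposite_eq_succ_iff :
    (∃ i j, b i = b j ∧ #(laterOpposite b i) = #(laterOpposite b j) + 1) ↔
      ∃ l : ℕ, ∃ hl : l + 2 < n,
        b ⟨l, by omega⟩ = b ⟨l + 2, hl⟩ ∧ b ⟨l, by omega⟩ ≠ b ⟨l + 1, by omega⟩ :=
  ⟨fun ⟨_, _, hb, hd⟩ => exists_isolated_of_card_laterOpposite hb hd,
    fun ⟨l, hl, h02, h01⟩ => ⟨_, _, h02, card_laterOpposite_of_isolated l hl h02 h01⟩⟩

end LaterOpposite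

section Representation

variable {V : Type*} {f : V → Bool} {A : V → V → Prop} {β : Type*} [DecidableEq β] {n : ℕ}
  {e : V ≃ Fin n} {b : Fin n → β}

theorem card_outNbhd_eq_card_laterOpposite [Fintype V] [DecidableRel A]
    (he : ∀ u v, A u v ↔ e u < e v ∧ b (e u) ≠ b (e v)) (u : V) :
    #(outNbhd A u) = #(laterOpposite b (e u)) :=
  card_equiv e fun w => by simp [laterOpposite, he]

theorem IsBipTournament.eq_iff_of_arc_iff (h : IsBipTournament f A)
    (he : ∀ u v, A u v ↔ e u < e v ∧ b (e u) ≠ b (e v)) (u v : V) :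
    f u = f v ↔ b (e u) = b (e v) := by
  constructor
  · intro hf
    by_contra hb
    rcases lt_trichotomy (e u) (e v) with hlt | heq | hlt
    · exact h.not_arc hf ((he u v).mpr ⟨hlt, hb⟩)
    · exact hb (congrArg b heq)
    · exact h.not_arc hf.symm ((he v u).mpr ⟨hlt, Ne.symm hb⟩)
  · intro hb
    by_contra hf
    by_cases huv : A u v
    · exact ((he u v).mp huv).2 hb
    · exact ((he v u).mp (h.arc_of_not_arc hf huv)).2 hb.symm

theorem IsBipTournament.exists_card_outNbhd_eq_succ_iff [Fintype V] [DecidableRel A]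
    (h : IsBipTournament f A) (he : ∀ u v, A u v ↔ e u < e v ∧ b (e u) ≠ b (e v)) :
    (∃ u1 u2, f u1 = f u2 ∧ #(outNbhd A u1) = #(outNbhd A u2) + 1) ↔
      ∃ i j, b i = b j ∧ #(laterOpposite b i) = #(laterOpposite b j) + 1 := by
  simp only [h.eq_iff_of_arc_iff he, card_outNbhd_eq_card_laterOpposite he]
  exact ⟨fun ⟨u1, u2, hu⟩ => ⟨e u1, e u2, hu⟩,
    fun ⟨i, j, hij⟩ => ⟨e.symm i, e.symm j, by simpa using hij⟩⟩

end Representation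

theorem exists_strictMono_mod_two_eq_iff {n : ℕ} (b : Fin n → Bool) :
    ∃ x : Fin n → ℕ, StrictMono x ∧ (∀ i, 0 < x i) ∧ ∀ i j, x i % 2 = x j % 2 ↔ b i = b j := by
  refine ⟨fun i => 2 * i + if b i then 1 else 2, fun i j hij => ?_, fun i => by positivity,
    fun i j => ?_⟩
  · have : (i : ℕ) < j := hij
    dsimp only
    split_ifs <;> omega
  · dsimp only
    cases b i <;> cases b j <;> simp

/-- For an acyclic bipartite tournament `D` of order `n`, the following are
equivalent: (1) some tournament completion of `D` has exactly one augmented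
`(2,1)`-dicycle; (2) two vertices `u1, u2` in a common partite set satisfy
`deg⁺(u1) = deg⁺(u2) + 1`; (3) `D ≅ D_X` for some `X = {x_1 < ⋯ < x_n} ⊂ ℤ⁺` with
`x_l ≡ x_{l+2} ≢ x_{l+1} (mod 2)` for some `l ∈ [n-2]`. -/
theorem stmt_11 {V : Type*} [Fintype V] [DecidableEq V] (n : ℕ)
    (hcard : Fintype.card V = n) (f : V → Bool) (A : V → V → Prop) [DecidableRel A]
    (h : IsBipTournament f A) (hacyc : Acyclic A) :
    ((∃ T : V → V → Prop, IsCompletion A T ∧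
        ∃ c : Fin 3 → V, Aug21 f A T c ∧
          ∀ c' : Fin 3 → V, Aug21 f A T c' → Set.range c' = Set.range c) ↔
      (∃ u1 u2 : V, f u1 = f u2 ∧
        (Finset.univ.filter fun w => A u1 w).card =
          (Finset.univ.filter fun w => A u2 w).card + 1)) ∧
    ((∃ u1 u2 : V, f u1 = f u2 ∧
        (Finset.univ.filter fun w => A u1 w).card =
          (Finset.univ.filter fun w => A u2 w).card + 1) ↔
      (∃ x : Fin n → ℕ, StrictMono x ∧ (∀ i, 0 < x i) ∧
        (∃ e : V ≃ Fin n, ∀ u v, A u v ↔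
            (x (e u) < x (e v) ∧ x (e u) % 2 ≠ x (e v) % 2)) ∧
        ∃ l : ℕ, ∃ hl : l + 2 < n,
          x ⟨l, by omega⟩ % 2 = x ⟨l + 2, hl⟩ % 2 ∧
          x ⟨l, by omega⟩ % 2 ≠ x ⟨l + 1, by omega⟩ % 2)) := by
  refine ⟨⟨fun ⟨T, hT, c, hc, huniq⟩ => h.exists_card_outNbhd_eq_succ hacyc hT hc huniq,
    fun ⟨u1, u2, hf, hd⟩ => h.exists_unique_aug21 hacyc hf hd⟩, ⟨fun hdeg => ?_, ?_⟩⟩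
  · obtain ⟨e, he⟩ := h.exists_equiv_fin hcard hacyc
    obtain ⟨x, hx, hpos, hpar⟩ := exists_strictMono_mod_two_eq_iff (f ∘ e.symm)
    have hxe : ∀ u v, A u v ↔ e u < e v ∧ x (e u) % 2 ≠ x (e v) % 2 := by
      simpa [hpar] using he
    refine ⟨x, hx, hpos, ⟨e, by simpa only [hx.lt_iff_lt] using hxe⟩, ?_⟩
    exact exists_card_laterOpposite_eq_succ_iff.mp
      ((h.exists_card_outNbhd_eq_succ_iff (b := fun i => x i % 2) hxe).mp hdeg)
  · rintro ⟨x, hx, -, ⟨e, he⟩, hpat⟩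
    have hxe : ∀ u v, A u v ↔ e u < e v ∧ x (e u) % 2 ≠ x (e v) % 2 := by
      simpa only [hx.lt_iff_lt] using he
    exact (h.exists_card_outNbhd_eq_succ_iff (b := fun i => x i % 2) hxe).mpr
      (exists_card_laterOpposite_eq_succ_iff.mpr hpat)
end
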